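/- arXiv:1910.10268 — 2 statements merged into one kernel-verified Lean document; each statement's English description precedes it below -/
import Mathlib

section
/- Let C = [-1,1]ⁿ and let g : ℝⁿ → [0,∞] be defined by g(x) = max{0, x₁/(n+2)} for x ∈ C and g(x) = +∞ otherwise, and let h(x) = g(-x). Then with G(t) = ∫_0^{1/t} sⁿ e^{-s} ds (decreasing and strictly concave on [0, 1/(n+2)]) one has ∫_C G((g(x)+h(x))/2) dx > (1/2)∫_C G(g(x)) dx + (1/2)∫_C G(h(x)) dx, and by symmetry ∫_C G(g) dx = ∫_C G(h) dx. -/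
open MeasureTheory Set

/-- `G(t) = ∫_t^∞ e^{-1/z} z^{-(n+2)} dz` (equivalently `∫_0^{1/t} sⁿ e^{-s} ds`). -/
noncomputable def Gfun (n : ℕ) (t : ℝ) : ℝ :=
  ∫ z in Ioi t, Real.exp (-(1 / z)) * (1 / z) ^ (n + 2)

/-- The cube `C = [-1,1]ⁿ`. -/
def cube (n : ℕ) : Set (Fin n → ℝ) := {x | ∀ i, |x i| ≤ 1}

open Nat in
noncomputable def phi (n : ℕ) (z : ℝ) : ℝ := Real.exp (-(1 / z)) * (1 / z) ^ (n + 2)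

open Nat in
lemma phi_zero (n : ℕ) : phi n 0 = 0 := by simp [phi]

open Nat in
lemma phi_nonneg (n : ℕ) {z : ℝ} (hz : 0 ≤ z) : 0 ≤ phi n z :=
  mul_nonneg (Real.exp_pos _).le (pow_nonneg (by positivity) _)

open Nat in
lemma phi_pos (n : ℕ) {z : ℝ} (hz : 0 < z) : 0 < phi n z :=
  mul_pos (Real.exp_pos _) (pow_pos (by positivity) _)

open Nat in
lemma phi_le (n : ℕ) {z : ℝ} (hz : 0 < z) : phi n z ≤ (n+2)! := by
  have hx : (0:ℝ) ≤ 1 / z := by positivity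
  have h := Real.pow_div_factorial_le_exp (x := 1/z) hx (n+2)
  rw [div_le_iff₀ (by positivity)] at h
  have : Real.exp (-(1/z)) = (Real.exp (1/z))⁻¹ := by
    rw [Real.exp_neg]
  rw [phi, this]
  rw [inv_mul_le_iff₀ (Real.exp_pos _)]
  calc (1/z)^(n+2) ≤ Real.exp (1/z) * (n+2)! := h
    _ = Real.exp (1/z) * (n+2)! := rfl

open Nat in
lemma phi_measurable (n : ℕ) : Measurable (phi n) := by
  unfold phi
  fun_prop

open Nat in
lemma phi_integrableOn_Ioi (n : ℕ) {a : ℝ} (ha : 0 ≤ a) : IntegrableOn (phi n) (Ioi a) := by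
  have h0 : IntegrableOn (phi n) (Ioi 0) := by
    have h1 : IntegrableOn (phi n) (Ioc 0 1) := by
      apply Integrable.mono' (g := fun _ => ((n+2)! : ℝ)) (integrableOn_const (by simp) (by simp))
        (phi_measurable n).aestronglyMeasurable.restrict
      filter_upwards [ae_restrict_mem measurableSet_Ioc] with z hz
      rw [Real.norm_eq_abs, abs_of_nonneg (phi_nonneg n hz.1.le)]
      exact phi_le n hz.1
    have h2 : IntegrableOn (phi n) (Ioi 1) := by
      apply Integrable.mono' (g := fun z => z ^ (-2 : ℝ))
        (integrableOn_Ioi_rpow_of_lt (by norm_num) one_pos)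
        (phi_measurable n).aestronglyMeasurable.restrict
      filter_upwards [ae_restrict_mem measurableSet_Ioi] with z hz
      have hz1 : (1:ℝ) < z := hz
      have hz0 : (0:ℝ) < z := lt_trans one_pos hz1
      rw [Real.norm_eq_abs, abs_of_nonneg (phi_nonneg n hz0.le)]
      have he : Real.exp (-(1/z)) ≤ 1 := by
        rw [Real.exp_le_one_iff]; exact neg_nonpos.mpr (by positivity)
      have hp : (1/z)^(n+2) ≤ (1/z)^2 :=
        pow_le_pow_of_le_one (by positivity) (by rw [div_le_one hz0]; exact hz1.le) (by omega)
      calc phi n z ≤ 1 * (1/z)^(n+2) := by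
              exact mul_le_mul_of_nonneg_right he (by positivity)
        _ ≤ (1/z)^2 := by rw [one_mul]; exact hp
        _ = z ^ (-2:ℝ) := by
            rw [Real.rpow_neg hz0.le, show ((2:ℝ)) = ((2:ℕ):ℝ) from by norm_num,
              Real.rpow_natCast, div_pow, one_pow, one_div]
    have : Ioi (0:ℝ) = Ioc 0 1 ∪ Ioi 1 := (Ioc_union_Ioi_eq_Ioi (by norm_num)).symm
    rw [this]
    exact h1.union h2
  exact h0.mono_set (Ioi_subset_Ioi ha)

open Nat in
lemma phi_deriv_pos (n : ℕ) {z : ℝ} (hz1 : 0 < z) (hz2 : z < ((n:ℝ)+2)⁻¹) :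
    0 < deriv (phi n) z := by
  have hne : z ≠ 0 := hz1.ne'
  have h1 : HasDerivAt (fun z : ℝ => Real.exp (-z⁻¹)) (Real.exp (-z⁻¹) * (z^2)⁻¹) z := by
    have := ((hasDerivAt_inv hne).neg).exp
    simpa using this
  have h2 := (hasDerivAt_inv hne).pow (n+2)
  have h : HasDerivAt (phi n)
      (Real.exp (-z⁻¹) * (z^2)⁻¹ * (z⁻¹)^(n+2) +
        Real.exp (-z⁻¹) * ((↑(n+2):ℝ) * (z⁻¹)^(n+2-1) * (-(z^2)⁻¹))) z := by
    have h := h1.mul h2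
    have hfun : phi n = fun z : ℝ => Real.exp (-z⁻¹) * (z⁻¹)^(n+2) := by
      funext w; simp [phi, one_div]
    rw [hfun]
    exact h
  rw [h.deriv]
  have hzi : ((n:ℝ)+2) < z⁻¹ := by
    have hmul : ((n:ℝ)+2) * z < 1 := by
      have := mul_lt_mul_of_pos_left hz2 (show (0:ℝ) < (n:ℝ)+2 by positivity)
      rwa [mul_inv_cancel₀ (by positivity : ((n:ℝ)+2) ≠ 0)] at this
    rw [← one_div, lt_div_iff₀ hz1]
    linarith
  have key : Real.exp (-z⁻¹) * (z^2)⁻¹ * (z⁻¹)^(n+2) +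
      Real.exp (-z⁻¹) * ((↑(n+2):ℝ) * (z⁻¹)^(n+2-1) * (-(z^2)⁻¹)) =
      Real.exp (-z⁻¹) * (z^2)⁻¹ * (z⁻¹)^(n+1) * (z⁻¹ - ((n:ℝ)+2)) := by
    rw [show n+2-1 = n+1 from rfl]
    push_cast
    ring
  rw [key]
  have hi : (0:ℝ) < z⁻¹ := inv_pos.2 hz1
  exact mul_pos (mul_pos (mul_pos (Real.exp_pos _) (inv_pos.2 (pow_pos hz1 2)))
    (pow_pos hi _)) (by linarith)

open Nat in
lemma phi_strictMonoOn (n : ℕ) : StrictMonoOn (phi n) (Icc 0 ((n:ℝ)+2)⁻¹) := by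
  have hmono : StrictMonoOn (phi n) (Ioc 0 ((n:ℝ)+2)⁻¹) := by
    apply strictMonoOn_of_deriv_pos (convex_Ioc _ _)
    · apply ContinuousOn.mul
      · apply Real.continuous_exp.comp_continuousOn
        exact (continuousOn_const.div continuousOn_id
          (fun z (hz : z ∈ Ioc (0:ℝ) ((n:ℝ)+2)⁻¹) => ne_of_gt hz.1)).neg
      · exact (continuousOn_const.div continuousOn_id
          (fun z (hz : z ∈ Ioc (0:ℝ) ((n:ℝ)+2)⁻¹) => ne_of_gt hz.1)).pow _
    · intro z hz
      rw [interior_Ioc] at hz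
      exact phi_deriv_pos n hz.1 hz.2
  intro x hx y hy hxy
  rcases eq_or_lt_of_le hx.1 with h0 | h0
  · have hy0 : 0 < y := by rw [h0]; exact hxy
    rw [← h0, phi_zero]
    exact phi_pos n hy0
  · exact hmono ⟨h0, hx.2⟩ ⟨h0.trans hxy, hy.2⟩ hxy

open Nat in
lemma Gfun_eq (n : ℕ) (t : ℝ) : Gfun n t = ∫ z in Ioi t, phi n z := rfl

open Nat in
lemma Gfun_split (n : ℕ) {a b : ℝ} (ha : 0 ≤ a) (hab : a ≤ b) :
    Gfun n a = (∫ z in a..b, phi n z) + Gfun n b := by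
  rw [intervalIntegral.integral_of_le hab, Gfun_eq, Gfun_eq,
    show Ioi a = Ioc a b ∪ Ioi b from (Ioc_union_Ioi_eq_Ioi hab).symm]
  exact setIntegral_union (Ioc_disjoint_Ioi le_rfl) measurableSet_Ioi
    ((phi_integrableOn_Ioi n ha).mono_set Ioc_subset_Ioi_self)
    (phi_integrableOn_Ioi n (ha.trans hab))

open Nat in
lemma phi_monotoneOn (n : ℕ) : MonotoneOn (phi n) (Icc 0 ((n:ℝ)+2)⁻¹) :=
  (phi_strictMonoOn n).monotoneOn

open Nat in
lemma phi_intervalIntegrable (n : ℕ) {a b : ℝ} (ha : 0 ≤ a) (hab : a ≤ b)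
    (hb : b ≤ ((n:ℝ)+2)⁻¹) : IntervalIntegrable (phi n) volume a b := by
  apply MonotoneOn.intervalIntegrable
  apply (phi_monotoneOn n).mono
  rw [uIcc_of_le hab]
  exact Icc_subset_Icc ha hb

open Nat in
lemma Gfun_mid (n : ℕ) {a b : ℝ} (ha : 0 ≤ a) (hb : b ≤ ((n:ℝ)+2)⁻¹) (hab : a < b) :
    (Gfun n a + Gfun n b) / 2 < Gfun n ((a+b)/2) := by
  set m := (a+b)/2 with hm
  set d := (b-a)/2 with hd
  have ham : a ≤ m := by rw [hm]; linarith
  have hmb : m ≤ b := by rw [hm]; linarith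
  have hmblt : m < b := by rw [hm]; linarith
  have hmc : m ≤ ((n:ℝ)+2)⁻¹ := hmb.trans hb
  have h1 : Gfun n a = (∫ z in a..m, phi n z) + Gfun n m := Gfun_split n ha ham
  have h2 : Gfun n m = (∫ z in m..b, phi n z) + Gfun n b := Gfun_split n (ha.trans ham) hmb
  have hI1 : IntervalIntegrable (phi n) volume m b := phi_intervalIntegrable n (ha.trans ham) hmb hb
  have hI2 : IntervalIntegrable (fun t => phi n (t - d)) volume m b := by
    have := (phi_intervalIntegrable n ha ham hmc).comp_sub_right d
    rwa [show a + d = m by rw [hm, hd]; ring, show m + d = b by rw [hm, hd]; ring] at this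
  have hsub : (∫ z in a..m, phi n z) = ∫ t in m..b, phi n (t - d) := by
    rw [intervalIntegral.integral_comp_sub_right (fun t => phi n t) d,
      show m - d = a by rw [hm, hd]; ring, show b - d = m by rw [hm, hd]; ring]
  have hkey : 0 < ∫ t in m..b, (phi n t - phi n (t - d)) := by
    apply intervalIntegral.intervalIntegral_pos_of_pos_on (hI1.sub hI2)
    · intro t ht
      have hd0 : 0 < d := by rw [hd]; linarith
      have h1' : t - d ∈ Icc (0:ℝ) ((n:ℝ)+2)⁻¹ := by
        constructor
        · have : a ≤ t - d := by
            have : m ≤ t := ht.1.le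
            have hmd : m - d = a := by rw [hm, hd]; ring
            linarith [ht.1]
          linarith
        · linarith [ht.2, hb]
      have h2' : t ∈ Icc (0:ℝ) ((n:ℝ)+2)⁻¹ := ⟨by linarith [ht.1, ham, ha], by linarith [ht.2, hb]⟩
      have := phi_strictMonoOn n h1' h2' (by linarith)
      linarith
    · exact hmblt
  rw [intervalIntegral.integral_sub hI1 hI2] at hkey
  linarith [h1, h2, hsub, hkey]

open Nat in
lemma Gfun_mid' (n : ℕ) {a b : ℝ} (ha : 0 ≤ a) (hb : 0 ≤ b) (hac : a ≤ ((n:ℝ)+2)⁻¹)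
    (hbc : b ≤ ((n:ℝ)+2)⁻¹) (hne : a ≠ b) :
    (Gfun n a + Gfun n b) / 2 < Gfun n ((a+b)/2) := by
  rcases hne.lt_or_gt with h | h
  · exact Gfun_mid n ha hbc h
  · have := Gfun_mid n hb hac h
    rw [show (b+a)/2 = (a+b)/2 by ring] at this
    linarith

open Nat in
lemma Gfun_continuousOn (n : ℕ) : ContinuousOn (Gfun n) (Icc 0 ((n:ℝ)+2)⁻¹) := by
  have hc : (0:ℝ) ≤ ((n:ℝ)+2)⁻¹ := by positivity
  have hint : IntegrableOn (phi n) (uIcc 0 ((n:ℝ)+2)⁻¹) := by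
    rw [uIcc_of_le hc]
    rw [integrableOn_Icc_iff_integrableOn_Ioc]
    have := (phi_intervalIntegrable n le_rfl hc le_rfl).1
    exact this
  have hP := intervalIntegral.continuousOn_primitive_interval hint
  rw [uIcc_of_le hc] at hP
  apply ContinuousOn.congr (((continuousOn_const (c := Gfun n 0)).sub hP))
  intro t ht
  have h := Gfun_split n (le_refl (0:ℝ)) ht.1
  simp only [Pi.sub_apply]
  linarith [h]

/-- With `g(x) = max(0, x₁/(n+2))` on `C` and `h(x) = g(-x)`, strict concavity of `G` on
`[0, 1/(n+2)]` yields `∫_C G((g+h)/2) > ½∫_C G(g) + ½∫_C G(h)`, while by symmetry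
`∫_C G(g) = ∫_C G(h)`. -/
theorem counterexample_core (n : ℕ) (hn : 0 < n)
    (g : (Fin n → ℝ) → ℝ) (hg : ∀ x, g x = max 0 (x ⟨0, hn⟩ / (n + 2))) :
    (∫ x in cube n, Gfun n ((g x + g (-x)) / 2)) >
      (1 / 2) * (∫ x in cube n, Gfun n (g x)) + (1 / 2) * (∫ x in cube n, Gfun n (g (-x))) ∧
    (∫ x in cube n, Gfun n (g x)) = ∫ x in cube n, Gfun n (g (-x)) := by
  set i0 : Fin n := ⟨0, hn⟩ with hi0
  have hnpos : (0:ℝ) < (n:ℝ) + 2 := by positivity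
  have hc0 : (0:ℝ) < ((n:ℝ)+2)⁻¹ := by positivity
  -- cube facts
  have hcube_eq : cube n = Set.pi univ (fun _ => Icc (-1:ℝ) 1) := by
    ext x
    simp only [cube, mem_setOf_eq, Set.mem_univ_pi, mem_Icc, abs_le]
  have hcube_meas : MeasurableSet (cube n) :=
    hcube_eq ▸ MeasurableSet.univ_pi (fun _ => measurableSet_Icc)
  have hcube_cpt : IsCompact (cube n) :=
    hcube_eq ▸ isCompact_univ_pi (fun _ => isCompact_Icc)
  have hneg_cube : (Neg.neg ⁻¹' cube n : Set (Fin n → ℝ)) = cube n := by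
    ext x
    simp only [cube, mem_preimage, mem_setOf_eq, Pi.neg_apply, abs_neg]
  have hnegmem : ∀ x ∈ cube n, -x ∈ cube n := by
    intro x hx i
    rw [Pi.neg_apply, abs_neg]
    exact hx i
  -- range of g
  have hgmem : ∀ x ∈ cube n, g x ∈ Icc (0:ℝ) ((n:ℝ)+2)⁻¹ := by
    intro x hx
    rw [hg]
    refine ⟨le_max_left _ _, max_le hc0.le ?_⟩
    rw [div_le_iff₀ hnpos, inv_mul_cancel₀ hnpos.ne']
    exact (abs_le.1 (hx i0)).2
  have hgfun : Continuous g := by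
    have : g = fun x => max 0 (x i0 / ((n:ℝ) + 2)) := funext hg
    rw [this]
    exact continuous_const.max ((continuous_apply i0).div_const _)
  -- continuity / integrability of the three integrands on the cube
  have hmapsto1 : ∀ x ∈ cube n, (g x + g (-x)) / 2 ∈ Icc (0:ℝ) ((n:ℝ)+2)⁻¹ := by
    intro x hx
    have h1 := hgmem x hx
    have h2 := hgmem _ (hnegmem x hx)
    exact ⟨by linarith [h1.1, h2.1], by linarith [h1.2, h2.2]⟩
  have hcont1 : ContinuousOn (fun x => Gfun n ((g x + g (-x)) / 2)) (cube n) :=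
    (Gfun_continuousOn n).comp
      (((hgfun.add (hgfun.comp continuous_neg)).div_const 2).continuousOn) hmapsto1
  have hcont2 : ContinuousOn (fun x => Gfun n (g x)) (cube n) :=
    (Gfun_continuousOn n).comp hgfun.continuousOn hgmem
  have hcont3 : ContinuousOn (fun x => Gfun n (g (-x))) (cube n) :=
    (Gfun_continuousOn n).comp (hgfun.comp continuous_neg).continuousOn
      (fun x hx => hgmem _ (hnegmem x hx))
  have hint1 := hcont1.integrableOn_compact (μ := volume) hcube_cpt
  have hint2 := hcont2.integrableOn_compact (μ := volume) hcube_cpt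
  have hint3 := hcont3.integrableOn_compact (μ := volume) hcube_cpt
  -- symmetry
  have hsym : (∫ x in cube n, Gfun n (g x)) = ∫ x in cube n, Gfun n (g (-x)) := by
    have h := (Measure.measurePreserving_neg (volume : Measure (Fin n → ℝ))).setIntegral_preimage_emb
      (MeasurableEquiv.neg (Fin n → ℝ)).measurableEmbedding (fun y => Gfun n (g y)) (cube n)
    rw [hneg_cube] at h
    exact h.symm
  refine ⟨?_, hsym⟩
  -- strict inequality
  set f : (Fin n → ℝ) → ℝ := fun x =>
    Gfun n ((g x + g (-x)) / 2) - (1/2) * Gfun n (g x) - (1/2) * Gfun n (g (-x)) with hf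
  have hfnonneg : ∀ x ∈ cube n, 0 ≤ f x := by
    intro x hx
    have h1 := hgmem x hx
    have h2 := hgmem _ (hnegmem x hx)
    rcases eq_or_ne (g x) (g (-x)) with he | he
    · rw [hf]
      simp only
      rw [← he, show (g x + g x)/2 = g x by ring]
      ring_nf
      linarith [le_refl (0:ℝ)]
    · have := Gfun_mid' n h1.1 h2.1 h1.2 h2.2 he
      rw [hf]; simp only; linarith
  have hfint : IntegrableOn f (cube n) :=
    (hint1.sub (hint2.const_mul (1/2))).sub (hint3.const_mul (1/2))
  have hkey : 0 < ∫ x in cube n, f x := by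
    rw [setIntegral_pos_iff_support_of_nonneg_ae ?_ hfint]
    · -- positive measure of support
      set S : Set (Fin n → ℝ) :=
        Set.pi univ (fun i => if i = i0 then Ioc (0:ℝ) 1 else Icc (-1:ℝ) 1) with hS
      have hSsub : S ⊆ Function.support f ∩ cube n := by
        intro x hxS
        have hx0 : x i0 ∈ Ioc (0:ℝ) 1 := by
          have := hxS i0 (mem_univ _)
          simpa using this
        have hxc : x ∈ cube n := by
          intro i
          by_cases hi : i = i0
          · subst hi
            rw [abs_le]
            exact ⟨by linarith [hx0.1], hx0.2⟩
          · have := hxS i (mem_univ _)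
            simp only [hi, if_false] at this
            exact abs_le.2 ⟨this.1, this.2⟩
        refine ⟨?_, hxc⟩
        have ha : g x = x i0 / ((n:ℝ)+2) := by
          rw [hg, max_eq_right (div_nonneg hx0.1.le hnpos.le)]
        have hb : g (-x) = 0 := by
          rw [hg]
          simp only [Pi.neg_apply]
          rw [max_eq_left]
          rw [neg_div]
          simp only [Left.neg_nonpos_iff]
          exact div_nonneg hx0.1.le hnpos.le
        have hane : g x ≠ g (-x) := by
          rw [ha, hb]
          exact ne_of_gt (div_pos hx0.1 hnpos)
        have h1 := hgmem x hxc
        have h2 := hgmem _ (hnegmem x hxc)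
        have := Gfun_mid' n h1.1 h2.1 h1.2 h2.2 hane
        rw [Function.mem_support, hf]
        simp only
        intro hcon
        linarith
      have hSmeas : volume S = ∏ i : Fin n, volume (if i = i0 then Ioc (0:ℝ) 1 else Icc (-1:ℝ) 1) := by
        rw [hS, volume_pi_pi]
      have hSpos : 0 < volume S := by
        rw [hSmeas]
        rw [CanonicallyOrderedAdd.prod_pos]
        intro i _
        by_cases hi : i = i0 <;> simp [hi, Real.volume_Ioc, Real.volume_Icc] <;> norm_num
      exact lt_of_lt_of_le hSpos (measure_mono hSsub)
    · filter_upwards [ae_restrict_mem hcube_meas] with x hx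
      exact hfnonneg x hx
  have hI2' : (∫ x in cube n, (1/2 : ℝ) * Gfun n (g x)) =
      (1/2 : ℝ) * ∫ x in cube n, Gfun n (g x) := integral_const_mul _ _
  have hI3' : (∫ x in cube n, (1/2 : ℝ) * Gfun n (g (-x))) =
      (1/2 : ℝ) * ∫ x in cube n, Gfun n (g (-x)) := integral_const_mul _ _
  have e1 : (∫ x in cube n, f x) =
      (∫ x in cube n, (Gfun n ((g x + g (-x))/2) - (1/2) * Gfun n (g x)))
        - ∫ x in cube n, (1/2) * Gfun n (g (-x)) :=
    integral_sub (hint1.sub (hint2.const_mul (1/2))) (hint3.const_mul (1/2))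
  have e2 : (∫ x in cube n, (Gfun n ((g x + g (-x))/2) - (1/2) * Gfun n (g x))) =
      (∫ x in cube n, Gfun n ((g x + g (-x))/2)) - ∫ x in cube n, (1/2) * Gfun n (g x) :=
    integral_sub hint1 (hint2.const_mul (1/2))
  linarith [hkey, e1, e2, hI2', hI3']
end

section
/- With R(n) = (1/n!) ∫_{n+2}^∞ ((z - (n+2))/2) z^{n-1} e^{-z} dz and r(n) = (1/n!) ∫_{2(n+2)}^∞ (z - 2(n+2)) z^{n-1} e^{-z} dz, one has R(n) ≥ 1/√(8πn) + O(1/n) and r(n) < (2/e)ⁿ; consequently (1 - r(n))/(1 - R(n)) = 1 + 1/√(8πn) + O(1/n) > 1 + c/√n for some universal constant c > 0 and all sufficiently large n. -/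
open MeasureTheory Set Real

/-- `R(n) = (1/n!) ∫_{n+2}^∞ ((z-(n+2))/2) z^{n-1} e^{-z} dz`. -/
noncomputable def Rfun (n : ℕ) : ℝ :=
  (1 / (n.factorial : ℝ)) *
    ∫ z in Ioi ((n : ℝ) + 2), ((z - ((n : ℝ) + 2)) / 2) * z ^ (n - 1) * Real.exp (-z)

/-- `r(n) = (1/n!) ∫_{2(n+2)}^∞ (z - 2(n+2)) z^{n-1} e^{-z} dz`. -/
noncomputable def rfun (n : ℕ) : ℝ :=
  (1 / (n.factorial : ℝ)) *
    ∫ z in Ioi (2 * ((n : ℝ) + 2)), (z - 2 * ((n : ℝ) + 2)) * z ^ (n - 1) * Real.exp (-z)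

/-!
Integrating by parts, `∫_a^∞ (z - a) z^{n-1} e^{-z} dz = aⁿe^{-a} - (a - n) Γ(n, a)`, where
`0 ≤ Γ(n, a) ≤ (n-1)!`. Hence `R(n)` is `(n+2)ⁿe^{-(n+2)}/(2 n!)` up to an error in `[-1/n, 0]`, and
`r(n) ≤ (2(n+2))ⁿe^{-2(n+2)}/n! = (2/e)ⁿ e^{-2} (n+2)ⁿe^{-(n+2)}/n!`. The bounds
`e^{2 - 4/(n+2)} ≤ (1 + 2/n)ⁿ ≤ e²` and Stirling's formula in Robbins' effective form
`√(2πn)(n/e)ⁿ ≤ n! ≤ √(2πn)(n/e)ⁿ e^{1/(12n)}` pin `(n+2)ⁿe^{-(n+2)}/n!` down to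
`(1 + O(1/n))/√(2πn)`, which gives `R(n) = 1/√(8πn) + O(1/n)` and `r(n) < (2/e)ⁿ`; the expansion
of the ratio is then elementary.
-/

open Filter Topology Nat

/-- `gammaTail n a = Γ(n + 1, a)`, the upper incomplete gamma function at a natural argument. -/
noncomputable def gammaTail (n : ℕ) (a : ℝ) : ℝ := ∫ z in Ioi a, z ^ n * exp (-z)

section GammaTail

variable {a : ℝ}

lemma integrableOn_pow_mul_exp_neg_Ioi (n : ℕ) (ha : 0 ≤ a) :
    IntegrableOn (fun z : ℝ => z ^ n * exp (-z)) (Ioi a) := by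
  refine IntegrableOn.mono_set ?_ (Ioi_subset_Ioi ha)
  refine (Real.GammaIntegral_convergent (s := n + 1) (by positivity)).congr_fun
    (fun z _ => ?_) measurableSet_Ioi
  simp only [add_sub_cancel_right, rpow_natCast, mul_comm]

lemma gammaTail_succ (n : ℕ) (ha : 0 ≤ a) :
    gammaTail (n + 1) a = (n + 1) * gammaTail n a + a ^ (n + 1) * exp (-a) := by
  have hderiv : ∀ z ∈ Ioi a, HasDerivAt (fun z : ℝ => -(z ^ (n + 1) * exp (-z)))
      (z ^ (n + 1) * exp (-z) - (n + 1) * (z ^ n * exp (-z))) z := fun z _ => by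
    refine ((hasDerivAt_pow (n + 1) z).mul (hasDerivAt_neg z).exp).neg.congr_deriv ?_
    simp only [Nat.add_sub_cancel]
    push_cast
    ring
  have hlim : Tendsto (fun z : ℝ => -(z ^ (n + 1) * exp (-z))) atTop (𝓝 0) := by
    simpa using (tendsto_pow_mul_exp_neg_atTop_nhds_zero (n + 1)).neg
  have hint := integrableOn_pow_mul_exp_neg_Ioi n ha
  have hint' := integrableOn_pow_mul_exp_neg_Ioi (n + 1) ha
  have key := integral_Ioi_of_hasDerivAt_of_tendsto (by fun_prop) hderiv
    (hint'.sub (hint.const_mul _)) hlim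
  rw [integral_sub hint' (hint.const_mul _), integral_const_mul] at key
  unfold gammaTail
  linarith

lemma gammaTail_zero_right (n : ℕ) : gammaTail n 0 = n ! := by
  induction n with
  | zero => simpa [gammaTail] using integral_exp_neg_Ioi 0
  | succ n ih => simp [gammaTail_succ n le_rfl, ih, Nat.factorial_succ]

lemma gammaTail_nonneg (n : ℕ) (ha : 0 ≤ a) : 0 ≤ gammaTail n a :=
  setIntegral_nonneg measurableSet_Ioi fun z hz => by
    have : 0 ≤ z := ha.trans (le_of_lt hz)
    positivity

lemma gammaTail_le_factorial (n : ℕ) (ha : 0 ≤ a) : gammaTail n a ≤ n ! := by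
  rw [← gammaTail_zero_right]
  refine setIntegral_mono_set (integrableOn_pow_mul_exp_neg_Ioi n le_rfl) ?_
    (Ioi_subset_Ioi ha).eventuallyLE
  filter_upwards [ae_restrict_mem measurableSet_Ioi] with z hz
  have : 0 ≤ z := le_of_lt hz
  positivity

lemma integral_Ioi_sub_mul_pow_mul_exp_neg (n : ℕ) (ha : 0 ≤ a) :
    ∫ z in Ioi a, (z - a) * z ^ n * exp (-z)
      = a ^ (n + 1) * exp (-a) - (a - (n + 1)) * gammaTail n a := by
  have hint := integrableOn_pow_mul_exp_neg_Ioi n ha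
  have hint' := integrableOn_pow_mul_exp_neg_Ioi (n + 1) ha
  have hsplit : ∀ z : ℝ,
      (z - a) * z ^ n * exp (-z) = z ^ (n + 1) * exp (-z) - a * (z ^ n * exp (-z)) :=
    fun z => by ring
  simp only [hsplit]
  rw [integral_sub hint' (hint.const_mul a), integral_const_mul]
  rw [show ∫ z in Ioi a, z ^ (n + 1) * exp (-z) = gammaTail (n + 1) a from rfl, gammaTail_succ n ha]
  unfold gammaTail
  ring

lemma integral_Ioi_sub_mul_pow_mul_exp_neg_nonneg (n : ℕ) (ha : 0 ≤ a) :
    0 ≤ ∫ z in Ioi a, (z - a) * z ^ n * exp (-z) :=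
  setIntegral_nonneg measurableSet_Ioi fun z (hz : a < z) => by
    have : 0 ≤ z - a := by linarith
    have : 0 ≤ z := by linarith
    positivity

end GammaTail

lemma stirlingSeq_le_sqrt_pi_mul_exp {n : ℕ} (hn : n ≠ 0) :
    Stirling.stirlingSeq n ≤ √π * exp (1 / (12 * n)) := by
  -- Robbins' bound makes `log (stirlingSeq k) - 1 / (12 k)` increase to its limit `log √π`.
  set f : ℕ → ℝ := fun k => log (Stirling.stirlingSeq (k + 1)) - 1 / (12 * (k + 1 : ℕ))
  have hmono : Monotone f := monotone_nat_of_le_succ fun k => by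
    have h := Stirling.log_stirlingSeq_sdiff_le (k + 1)
    have htel : (1 : ℝ) / (12 * (k + 1 : ℕ) * ((k + 1 : ℕ) + 1))
        = 1 / (12 * (k + 1 : ℕ)) - 1 / (12 * (k + 1 + 1 : ℕ)) := by
      push_cast
      field_simp
      ring
    simp only [f]
    linarith
  have hlim : Tendsto f atTop (𝓝 (log √π - 0)) := by
    refine ((continuousAt_log (by positivity)).tendsto.comp
      (Stirling.tendsto_stirlingSeq_sqrt_pi.comp (tendsto_add_atTop_nat 1))).sub ?_
    exact tendsto_const_nhds.div_atTop <| Tendsto.const_mul_atTop (by norm_num)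
      (tendsto_natCast_atTop_atTop.comp (tendsto_add_atTop_nat 1))
  obtain ⟨m, rfl⟩ := Nat.exists_eq_add_one_of_ne_zero hn
  have hle : log (Stirling.stirlingSeq (m + 1)) ≤ log √π + 1 / (12 * (m + 1 : ℕ)) := by
    have := hmono.ge_of_tendsto hlim m
    simp only [f] at this
    linarith
  rwa [log_le_iff_le_exp (Stirling.stirlingSeq'_pos m), exp_add, exp_log (by positivity)] at hle

lemma factorial_le_stirling_mul_exp {n : ℕ} (hn : n ≠ 0) :
    (n ! : ℝ) ≤ √(2 * π * n) * (n / exp 1) ^ n * exp (1 / (12 * n)) := by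
  have hsplit : √(2 * π * n) * (n / exp 1) ^ n = √π * (√(2 * n) * (n / exp 1) ^ n) := by
    rw [show 2 * π * n = π * (2 * n) by ring, sqrt_mul pi_pos.le]
    ring
  have h := stirlingSeq_le_sqrt_pi_mul_exp hn
  rw [Stirling.stirlingSeq, div_le_iff₀ (by positivity)] at h
  rw [hsplit]
  linarith

lemma add_pow_le_pow_mul_exp {x t : ℝ} (hx : 0 < x) (hxt : 0 ≤ x + t) (k : ℕ) :
    (x + t) ^ k ≤ x ^ k * exp (k * t / x) := by
  have h : x + t ≤ x * exp (t / x) := by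
    calc x + t = x * (t / x + 1) := by field_simp; ring
      _ ≤ x * exp (t / x) := by gcongr; exact add_one_le_exp _
  calc (x + t) ^ k ≤ (x * exp (t / x)) ^ k := pow_le_pow_left₀ hxt h k
    _ = x ^ k * exp (k * t / x) := by rw [mul_pow, ← exp_nat_mul, mul_div_assoc]

lemma pow_mul_exp_le_add_pow {x t : ℝ} (hx : 0 ≤ x) (hxt : 0 < x + t) (k : ℕ) :
    x ^ k * exp (k * t / (x + t)) ≤ (x + t) ^ k := by
  have h : x * exp (t / (x + t)) ≤ x + t := by
    have h1 : x / (x + t) ≤ exp (-(t / (x + t))) := by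
      calc x / (x + t) = -(t / (x + t)) + 1 := by field_simp; ring
        _ ≤ exp (-(t / (x + t))) := add_one_le_exp _
    rw [div_le_iff₀ hxt] at h1
    calc x * exp (t / (x + t)) ≤ exp (-(t / (x + t))) * (x + t) * exp (t / (x + t)) := by gcongr
      _ = x + t := by rw [exp_neg]; field_simp
  calc x ^ k * exp (k * t / (x + t)) = (x * exp (t / (x + t))) ^ k := by
        rw [mul_pow, ← exp_nat_mul, mul_div_assoc]
    _ ≤ (x + t) ^ k := pow_le_pow_left₀ (by positivity) h k

lemma div_exp_one_pow (n : ℕ) : ((n : ℝ) / exp 1) ^ n = n ^ n * exp (-n) := by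
  rw [div_pow, exp_one_pow, exp_neg, div_eq_mul_inv]

lemma add_two_pow_mul_exp_neg_div_factorial_le {n : ℕ} (hn : n ≠ 0) :
    ((n : ℝ) + 2) ^ n * exp (-(n + 2)) / n ! ≤ 1 / √(2 * π * n) := by
  have hn' : (0 : ℝ) < n := by positivity
  have hnum : ((n : ℝ) + 2) ^ n * exp (-(n + 2)) ≤ (n / exp 1) ^ n := by
    calc ((n : ℝ) + 2) ^ n * exp (-(n + 2)) ≤ n ^ n * exp (n * 2 / n) * exp (-(n + 2)) := by
          gcongr; exact add_pow_le_pow_mul_exp hn' (by positivity) n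
      _ = (n / exp 1) ^ n := by
          rw [div_exp_one_pow, mul_assoc, ← exp_add]; congr 2; field_simp; ring
  calc ((n : ℝ) + 2) ^ n * exp (-(n + 2)) / n !
      ≤ (n / exp 1) ^ n / (√(2 * π * n) * (n / exp 1) ^ n) :=
        div_le_div₀ (by positivity) hnum (by positivity) (Stirling.le_factorial_stirling n)
    _ = 1 / √(2 * π * n) := by field_simp

lemma exp_neg_div_sqrt_le_add_two_pow_mul_exp_neg_div_factorial {n : ℕ} (hn : n ≠ 0) :
    exp (-(4 / (n + 2) + 1 / (12 * n))) / √(2 * π * n)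
      ≤ ((n : ℝ) + 2) ^ n * exp (-(n + 2)) / n ! := by
  have hn' : (0 : ℝ) < n := by positivity
  have hnum : (n / exp 1) ^ n * exp (-(4 / (n + 2))) ≤ ((n : ℝ) + 2) ^ n * exp (-(n + 2)) := by
    calc (n / exp 1) ^ n * exp (-(4 / (n + 2)))
        = n ^ n * exp (n * 2 / (n + 2)) * exp (-(n + 2)) := by
          rw [div_exp_one_pow, mul_assoc, mul_assoc, ← exp_add, ← exp_add]
          congr 2
          field_simp
          ring
      _ ≤ ((n : ℝ) + 2) ^ n * exp (-(n + 2)) := by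
          gcongr; exact pow_mul_exp_le_add_pow hn'.le (by positivity) n
  calc exp (-(4 / (n + 2) + 1 / (12 * n))) / √(2 * π * n)
      = (n / exp 1) ^ n * exp (-(4 / (n + 2)))
          / (√(2 * π * n) * (n / exp 1) ^ n * exp (1 / (12 * n))) := by
        rw [neg_add, exp_add, exp_neg (1 / _)]; field_simp
    _ ≤ ((n : ℝ) + 2) ^ n * exp (-(n + 2)) / n ! :=
        div_le_div₀ (by positivity) hnum (by positivity) (factorial_le_stirling_mul_exp hn)

lemma Rfun_eq {n : ℕ} (hn : n ≠ 0) :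
    Rfun n = ((n + 2 : ℝ) ^ n * exp (-(n + 2)) / n !) / 2 - gammaTail (n - 1) (n + 2) / n ! := by
  obtain ⟨m, rfl⟩ := Nat.exists_eq_add_one_of_ne_zero hn
  have hI := integral_Ioi_sub_mul_pow_mul_exp_neg m (a := ((m + 1 : ℕ) : ℝ) + 2) (by positivity)
  simp only [Rfun, Nat.add_sub_cancel, div_mul_eq_mul_div, integral_div, hI]
  push_cast
  ring

lemma rfun_eq {n : ℕ} (hn : n ≠ 0) :
    rfun n = ((2 * (n + 2) : ℝ) ^ n * exp (-(2 * (n + 2)))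
      - (n + 4) * gammaTail (n - 1) (2 * (n + 2))) / n ! := by
  obtain ⟨m, rfl⟩ := Nat.exists_eq_add_one_of_ne_zero hn
  have hI :=
    integral_Ioi_sub_mul_pow_mul_exp_neg m (a := 2 * (((m + 1 : ℕ) : ℝ) + 2)) (by positivity)
  simp only [rfun, Nat.add_sub_cancel, hI]
  push_cast
  ring

lemma Rfun_nonneg (n : ℕ) : 0 ≤ Rfun n := by
  have hI := integral_Ioi_sub_mul_pow_mul_exp_neg_nonneg (n - 1) (a := (n : ℝ) + 2) (by positivity)
  simp only [Rfun, div_mul_eq_mul_div, integral_div]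
  positivity

lemma rfun_nonneg (n : ℕ) : 0 ≤ rfun n := by
  have hI :=
    integral_Ioi_sub_mul_pow_mul_exp_neg_nonneg (n - 1) (a := 2 * ((n : ℝ) + 2)) (by positivity)
  unfold rfun
  positivity

lemma gammaTail_pred_div_factorial_le {n : ℕ} (hn : n ≠ 0) {a : ℝ} (ha : 0 ≤ a) :
    gammaTail (n - 1) a / n ! ≤ 1 / n := by
  rw [← Nat.mul_factorial_pred hn, Nat.cast_mul, div_le_div_iff₀ (by positivity) (by positivity)]
  have := gammaTail_le_factorial (n - 1) ha
  nlinarith [(Nat.cast_pos (α := ℝ)).mpr (Nat.pos_of_ne_zero hn)]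

lemma sqrt_eight_pi_mul (x : ℝ) : √(8 * π * x) = 2 * √(2 * π * x) := by
  rw [show 8 * π * x = 2 ^ 2 * (2 * π * x) by ring, sqrt_mul (by positivity), sqrt_sq zero_le_two]

lemma Rfun_le {n : ℕ} (hn : n ≠ 0) : Rfun n ≤ 1 / √(8 * π * n) := by
  have hJ : 0 ≤ gammaTail (n - 1) (n + 2) / n ! := by
    have := gammaTail_nonneg (n - 1) (a := (n : ℝ) + 2) (by positivity)
    positivity
  have hp := add_two_pow_mul_exp_neg_div_factorial_le hn
  have h8 : 1 / √(8 * π * n) = 1 / √(2 * π * n) / 2 := by rw [sqrt_eight_pi_mul]; ring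
  rw [Rfun_eq hn, h8]
  linarith

lemma one_div_sqrt_eight_pi_mul_le {n : ℕ} (hn : n ≠ 0) : 1 / √(8 * π * n) ≤ 1 / 4 := by
  refine one_div_le_one_div_of_le (by norm_num) (le_sqrt_of_sq_le ?_)
  nlinarith [pi_gt_three, (Nat.one_le_cast (α := ℝ)).mpr (Nat.pos_of_ne_zero hn)]

lemma Rfun_ge {n : ℕ} (hn : n ≠ 0) : 1 / √(8 * π * n) - 3 / n ≤ Rfun n := by
  have hu : 4 / ((n : ℝ) + 2) + 1 / (12 * n) ≤ 5 / n := by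
    rw [div_add_div _ _ (by positivity) (by positivity),
      div_le_div_iff₀ (by positivity) (by positivity)]
    nlinarith
  have h2 : 1 / √(2 * π * n) = 2 * (1 / √(8 * π * n)) := by rw [sqrt_eight_pi_mul]; ring
  have hS := one_div_sqrt_eight_pi_mul_le hn
  set S := 1 / √(8 * π * n)
  set u := 4 / ((n : ℝ) + 2) + 1 / (12 * n)
  have hp : (1 - u) * (2 * S) ≤ ((n : ℝ) + 2) ^ n * exp (-(n + 2)) / n ! := by
    refine le_trans ?_ (exp_neg_div_sqrt_le_add_two_pow_mul_exp_neg_div_factorial hn)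
    rw [div_eq_mul_one_div, h2]
    gcongr
    linarith [add_one_le_exp (-u)]
  have huS : u * S ≤ 5 / n * (1 / 4) := mul_le_mul hu hS (by positivity) (by positivity)
  have hJ := gammaTail_pred_div_factorial_le hn (a := (n : ℝ) + 2) (by positivity)
  rw [Rfun_eq hn]
  linarith [sub_mul 1 u S, div_eq_mul_one_div (5 : ℝ) n, div_eq_mul_one_div (3 : ℝ) n,
    (by positivity : (0 : ℝ) ≤ 1 / n)]

lemma rfun_lt {n : ℕ} (hn : n ≠ 0) : rfun n < (2 / exp 1) ^ n := by
  have hJ := gammaTail_nonneg (n - 1) (a := 2 * ((n : ℝ) + 2)) (by positivity)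
  have hsqrt : 1 ≤ √(2 * π * n) := by
    refine one_le_sqrt.mpr ?_
    nlinarith [pi_gt_three, (Nat.one_le_cast (α := ℝ)).mpr (Nat.pos_of_ne_zero hn)]
  have hp : ((n : ℝ) + 2) ^ n * exp (-(n + 2)) / n ! ≤ 1 :=
    (add_two_pow_mul_exp_neg_div_factorial_le hn).trans (div_le_one_of_le₀ hsqrt (by positivity))
  have hfactor : (2 * (n + 2) : ℝ) ^ n * exp (-(2 * (n + 2))) / n !
      = (2 / exp 1) ^ n * exp (-2) * (((n : ℝ) + 2) ^ n * exp (-(n + 2)) / n !) := by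
    rw [div_pow, exp_one_pow, mul_pow]
    field_simp
    rw [← exp_add, ← exp_add]
    ring_nf
  calc rfun n ≤ (2 * (n + 2) : ℝ) ^ n * exp (-(2 * (n + 2))) / n ! := by
        rw [rfun_eq hn]
        gcongr
        exact sub_le_self _ (by positivity)
    _ ≤ (2 / exp 1) ^ n * exp (-2) := by
        rw [hfactor]
        exact mul_le_of_le_one_right (by positivity) hp
    _ < (2 / exp 1) ^ n := mul_lt_of_lt_one_right (by positivity) (exp_lt_one_iff.mpr (by norm_num))

lemma abs_one_sub_div_one_sub_sub_one_add_le {R r S ε : ℝ} (hS : S ≤ 1 / 4) (hSR : S - ε ≤ R)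
    (hRS : R ≤ S) (hR : 0 ≤ R) (hr : 0 ≤ r) (hrε : r ≤ ε) (hSS : S * S ≤ ε) :
    |(1 - r) / (1 - R) - (1 + S)| ≤ 3 * ε := by
  have hD : 3 / 4 ≤ 1 - R := by linarith
  have hnum : (1 - r) / (1 - R) - (1 + S) = (R - S - r + S * R) / (1 - R) := by
    field_simp
    ring
  rw [hnum, abs_div, abs_of_pos (show 0 < 1 - R by linarith), div_le_iff₀ (by linarith)]
  have hSR0 : 0 ≤ S * R := mul_nonneg (hR.trans hRS) hR
  have hSR1 : S * R ≤ S * S := mul_le_mul_of_nonneg_left hRS (hR.trans hRS)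
  rw [abs_le]
  constructor <;> nlinarith

lemma eventually_pow_le_one_div {q : ℝ} (hq0 : 0 ≤ q) (hq1 : q < 1) :
    ∀ᶠ n : ℕ in atTop, q ^ n ≤ 1 / n := by
  filter_upwards [(tendsto_self_mul_const_pow_of_lt_one hq0 hq1).eventually_le_const one_pos,
    eventually_ne_atTop 0] with n hn hn0
  rw [le_div_iff₀ (by positivity)]
  linarith

lemma eventually_one_add_div_sqrt_lt {f : ℕ → ℝ} {a C : ℝ} (ha : 0 < a)
    (h : ∀ᶠ n : ℕ in atTop, |f n - (1 + a / √n)| ≤ C / n) :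
    ∀ᶠ n : ℕ in atTop, 1 + a / 2 / √n < f n := by
  have hlim : Tendsto (fun n : ℕ => C / √n) atTop (𝓝 0) :=
    tendsto_const_nhds.div_atTop (tendsto_sqrt_atTop.comp tendsto_natCast_atTop_atTop)
  filter_upwards [h, hlim.eventually_lt_const (half_pos ha), eventually_ne_atTop 0]
    with n hn hsmall hn0
  have hsqrt : 0 < √(n : ℝ) := by positivity
  have hCn : C / n < a / 2 / √n := by
    rw [show C / n = C / √n / √n by rw [div_div, mul_self_sqrt (Nat.cast_nonneg n)]]
    exact div_lt_div_of_pos_right hsmall hsqrt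
  have := (abs_le.mp hn).1
  have : a / √n = a / 2 / √n + a / 2 / √n := by ring
  linarith

lemma eventually_abs_ratio_sub_le :
    ∀ᶠ n : ℕ in atTop, |(1 - rfun n) / (1 - Rfun n) - (1 + 1 / √(8 * π * n))| ≤ 9 / n := by
  have hq : 2 / exp 1 < 1 := (div_lt_one (exp_pos 1)).mpr (by linarith [exp_one_gt_d9])
  filter_upwards [eventually_pow_le_one_div (by positivity) hq, eventually_ne_atTop 0]
    with n hpow hn
  have hn' : (0 : ℝ) < n := by positivity
  have hr : rfun n ≤ 3 / n :=
    (rfun_lt hn).le.trans (hpow.trans (div_le_div_of_nonneg_right (by norm_num) hn'.le))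
  have hSS : 1 / √(8 * π * n) * (1 / √(8 * π * n)) ≤ 3 / n := by
    rw [one_div_mul_one_div, mul_self_sqrt (by positivity), div_le_div_iff₀ (by positivity) hn']
    nlinarith [pi_gt_three]
  convert abs_one_sub_div_one_sub_sub_one_add_le (one_div_sqrt_eight_pi_mul_le hn) (Rfun_ge hn)
    (Rfun_le hn) (Rfun_nonneg n) (rfun_nonneg n) hr hSS using 1
  ring

/-- `R(n) ≥ 1/√(8πn) + O(1/n)`, `r(n) < (2/e)ⁿ`, hence
`(1-r(n))/(1-R(n)) = 1 + 1/√(8πn) + O(1/n) > 1 + c/√n` for large `n`. -/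
theorem asymptotics_R_r :
    (∃ C : ℝ, ∃ N : ℕ, ∀ n ≥ N, Rfun n ≥ 1 / Real.sqrt (8 * π * n) - C / n) ∧
    (∃ N : ℕ, ∀ n ≥ N, rfun n < (2 / Real.exp 1) ^ n) ∧
    (∃ C : ℝ, ∃ N : ℕ, ∀ n ≥ N,
      |(1 - rfun n) / (1 - Rfun n) - (1 + 1 / Real.sqrt (8 * π * n))| ≤ C / n) ∧
    (∃ c : ℝ, 0 < c ∧ ∃ N : ℕ, ∀ n ≥ N,
      (1 - rfun n) / (1 - Rfun n) > 1 + c / Real.sqrt n) := by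
  have hR := (eventually_ne_atTop 0).mono fun n hn => Rfun_ge hn
  have hr := (eventually_ne_atTop 0).mono fun n hn => rfun_lt hn
  have hratio : ∀ᶠ n : ℕ in atTop,
      |(1 - rfun n) / (1 - Rfun n) - (1 + 1 / √(8 * π) / √n)| ≤ 9 / n := by
    simpa only [sqrt_mul' _ (Nat.cast_nonneg _), div_div] using eventually_abs_ratio_sub_le
  refine ⟨⟨3, eventually_atTop.mp hR⟩, eventually_atTop.mp hr,
    ⟨9, eventually_atTop.mp eventually_abs_ratio_sub_le⟩,
    ⟨1 / √(8 * π) / 2, by positivity, eventually_atTop.mp ?_⟩⟩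
  exact eventually_one_add_div_sqrt_lt (by positivity) hratio
end
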